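/- Let P be a simple polygon in ℝ² all of whose interior angles lie strictly between π/2 and 3π/2, and suppose P has at least one inscribed right isosceles triangle. Then among all inscribed right isosceles triangles of P there is one of minimal leg length: the infimum over all triples of distinct points (y, z, u) ∈ P³ with |z − y| = |u − y| and ⟪z − y, u − y⟫ = 0 of the leg length |z − y| is positive and is attained by some such triple. -/

import Mathlib

/-!
Around every point of a simple polygon the polygon is, uniformly, just two adjacent edges: a
Lebesgue number `δ` of the cover of the polygon by the open sets "complement of all edges
but the `i`-th and `(i+1)`-st" does this. Two adjacent edges meeting at an obtuse angle carry
no right angle with its apex on them, so every inscribed right isosceles triangle has legs of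
length at least `δ`. Leg lengths at least `δ > 0` force the three points to be distinct, so the
set of leg lengths is the image of a compact set of triples; its infimum is therefore attained,
and it is at least `δ`.
-/

open scoped RealInnerProductSpace

noncomputable section

/-- The Euclidean plane. -/
abbrev Pt := EuclideanSpace ℝ (Fin 2)

/-- Counterclockwise rotation of a vector by `π/2`: `(x, y) ↦ (-y, x)`. -/
def rotCCW (w : Pt) : Pt := (WithLp.equiv 2 (Fin 2 → ℝ)).symm ![-w 1, w 0]

/-- Clockwise rotation of a vector by `π/2`: `(x, y) ↦ (y, -x)`. -/
def rotCW (w : Pt) : Pt := (WithLp.equiv 2 (Fin 2 → ℝ)).symm ![w 1, -w 0]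

/-- `v : ZMod n → Pt` (with `3 ≤ n`) is a simple polygon: consecutive vertices are
distinct, consecutive edges meet exactly in their common vertex, and
non-consecutive edges are disjoint. -/
def IsSimplePolygon {n : ℕ} (v : ZMod n → Pt) : Prop :=
  3 ≤ n ∧
  (∀ i, v i ≠ v (i + 1)) ∧
  (∀ i : ZMod n,
    segment ℝ (v i) (v (i + 1)) ∩ segment ℝ (v (i + 1)) (v (i + 2)) = {v (i + 1)}) ∧
  (∀ i j : ZMod n, i ≠ j → i ≠ j + 1 → j ≠ i + 1 →
    segment ℝ (v i) (v (i + 1)) ∩ segment ℝ (v j) (v (j + 1)) = ∅)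

/-- The polygon itself: the union of its edges. -/
def polygonSet {n : ℕ} (v : ZMod n → Pt) : Set Pt :=
  ⋃ i : ZMod n, segment ℝ (v i) (v (i + 1))

/-- All interior angles of the polygon lie strictly between `π/2` and `3π/2`:
at every vertex `vᵢ` the inner product `⟪vᵢ₋₁ - vᵢ, vᵢ₊₁ - vᵢ⟫` is negative. -/
def ObtuseAngles {n : ℕ} (v : ZMod n → Pt) : Prop :=
  ∀ i : ZMod n, ⟪v (i - 1) - v i, v (i + 1) - v i⟫ < 0

/-- The set of leg lengths of right isosceles triangles inscribed in the polygon. -/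
def legLengths {n : ℕ} (v : ZMod n → Pt) : Set ℝ :=
  {l : ℝ | ∃ y z u : Pt, y ∈ polygonSet v ∧ z ∈ polygonSet v ∧ u ∈ polygonSet v ∧
    y ≠ z ∧ y ≠ u ∧ z ≠ u ∧ ‖z - y‖ = ‖u - y‖ ∧ ⟪z - y, u - y⟫ = 0 ∧ l = ‖z - y‖}

open Metric Set

section Rays

variable {E : Type*} [NormedAddCommGroup E] [InnerProductSpace ℝ E]

def twoRays (A C : E) : Set E := {x | ∃ s : ℝ, 0 ≤ s ∧ (x = s • A ∨ x = s • C)}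

lemma twoRays_comm (A C : E) : twoRays A C = twoRays C A :=
  Set.ext fun _ => exists_congr fun _ => and_congr_right' or_comm

lemma exists_sub_eq_smul_of_mem_segment {p q x : E} (hx : x ∈ segment ℝ p q) :
    ∃ θ : ℝ, 0 ≤ θ ∧ x - p = θ • (q - p) := by
  rw [segment_eq_image'] at hx
  obtain ⟨θ, hθ, rfl⟩ := hx
  exact ⟨θ, hθ.1, add_sub_cancel_left _ _⟩

variable {A C : E} (hAC : ⟪A, C⟫ < 0)
include hAC

lemma inner_smul_sub_smul_neg {s t : ℝ} (hs : 0 ≤ s) (ht : 0 ≤ t) (hne : t • C ≠ s • A) :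
    ⟪A, t • C - s • A⟫ < 0 := by
  rw [inner_sub_right, real_inner_smul_right, real_inner_smul_right, real_inner_self_eq_norm_sq]
  rcases ht.eq_or_lt with rfl | ht
  · have hs : 0 < s := hs.lt_of_ne (by rintro rfl; simp at hne)
    have hA : 0 < ‖A‖ := norm_pos_iff.2 (by rintro rfl; simp at hAC)
    nlinarith [mul_pos hs (pow_pos hA 2)]
  · nlinarith [mul_neg_of_pos_of_neg ht hAC, sq_nonneg ‖A‖]

lemma inner_sub_smul_ne_zero {s : ℝ} (hs : 0 ≤ s) {u : E} (hu : u ∈ twoRays A C)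
    (hne : u ≠ s • A) : ⟪A, u - s • A⟫ ≠ 0 := by
  obtain ⟨r, hr, rfl | rfl⟩ := hu
  · have hA : A ≠ 0 := by rintro rfl; simp at hAC
    rw [← sub_smul, real_inner_smul_right, real_inner_self_eq_norm_sq]
    exact mul_ne_zero (sub_ne_zero.2 fun h => hne (h ▸ rfl)) (by positivity)
  · exact (inner_smul_sub_smul_neg hAC hs hr hne).ne

lemma inner_smul_sub_smul_pos {s t r : ℝ} (hs : 0 ≤ s) (ht : 0 ≤ t) (hr : 0 ≤ r)
    (hz : t • C ≠ s • A) (hu : r • C ≠ s • A) :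
    0 < ⟪t • C - s • A, r • C - s • A⟫ := by
  have hA := inner_smul_sub_smul_neg hAC hs hr hu
  have hC : 0 < ⟪C, r • C - s • A⟫ := by
    have := inner_smul_sub_smul_neg (by rwa [real_inner_comm]) hr hs hu.symm
    rwa [← neg_sub, inner_neg_right, neg_neg_iff_pos] at this
  have hts : 0 < t ∨ 0 < s := by
    by_contra! h
    exact hz (by rw [le_antisymm h.1 ht, le_antisymm h.2 hs, zero_smul, zero_smul])
  rw [inner_sub_left, real_inner_smul_left, real_inner_smul_left]
  rcases hts with ht' | hs'
  · nlinarith [mul_pos ht' hC, mul_nonneg hs (neg_nonneg.2 hA.le)]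
  · nlinarith [mul_nonneg ht hC.le, mul_pos hs' (neg_pos.2 hA)]

theorem inner_sub_ne_zero_of_mem_twoRays {y z u : E} (hy : y ∈ twoRays A C)
    (hz : z ∈ twoRays A C) (hu : u ∈ twoRays A C) (hzy : z ≠ y) (huy : u ≠ y) :
    ⟪z - y, u - y⟫ ≠ 0 := by
  wlog hyA : ∃ s : ℝ, 0 ≤ s ∧ y = s • A generalizing A C
  · rw [twoRays_comm] at hy hz hu
    refine this (by rwa [real_inner_comm]) hy hz hu ?_
    obtain ⟨s, hs, rfl | rfl⟩ := hy
    · exact ⟨s, hs, rfl⟩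
    · exact absurd ⟨s, hs, rfl⟩ hyA
  obtain ⟨s, hs, rfl⟩ := hyA
  have leg_along_A : ∀ {t : ℝ} {w : E}, t • A ≠ s • A → w ∈ twoRays A C → w ≠ s • A →
      ⟪t • A - s • A, w - s • A⟫ ≠ 0 := fun htA hw hws => by
    rw [← sub_smul, real_inner_smul_left]
    exact mul_ne_zero (sub_ne_zero.2 fun h => htA (h ▸ rfl))
      (inner_sub_smul_ne_zero hAC hs hw hws)
  obtain ⟨t, ht, rfl | rfl⟩ := id hz
  · exact leg_along_A hzy hu huy
  obtain ⟨r, hr, rfl | rfl⟩ := id hu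
  · rw [real_inner_comm]
    exact leg_along_A huy hz hzy
  · exact (inner_smul_sub_smul_pos hAC hs ht hr hzy huy).ne'

end Rays

def polygonEdge {n : ℕ} (v : ZMod n → Pt) (i : ZMod n) : Set Pt := segment ℝ (v i) (v (i + 1))

lemma isCompact_polygonEdge {n : ℕ} (v : ZMod n → Pt) (i : ZMod n) :
    IsCompact (polygonEdge v i) := by
  rw [polygonEdge, ← convexHull_pair (𝕜 := ℝ)]
  exact (toFinite _).isCompact_convexHull ℝ

lemma isCompact_polygonSet {n : ℕ} [NeZero n] (v : ZMod n → Pt) : IsCompact (polygonSet v) :=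
  isCompact_iUnion (isCompact_polygonEdge v)

lemma ObtuseAngles.inner_sub_ne_zero {n : ℕ} {v : ZMod n → Pt} (hA : ObtuseAngles v)
    {i : ZMod n} {y z u : Pt} (hy : y ∈ polygonEdge v i ∪ polygonEdge v (i + 1))
    (hz : z ∈ polygonEdge v i ∪ polygonEdge v (i + 1))
    (hu : u ∈ polygonEdge v i ∪ polygonEdge v (i + 1)) (hzy : z ≠ y) (huy : u ≠ y) :
    ⟪z - y, u - y⟫ ≠ 0 := by
  set b := v (i + 1)
  have hrays : ∀ x ∈ polygonEdge v i ∪ polygonEdge v (i + 1),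
      x - b ∈ twoRays (v i - b) (v (i + 1 + 1) - b) := by
    rintro x (hx | hx)
    · rw [polygonEdge, segment_symm] at hx
      obtain ⟨θ, hθ, h⟩ := exists_sub_eq_smul_of_mem_segment hx
      exact ⟨θ, hθ, .inl h⟩
    · obtain ⟨θ, hθ, h⟩ := exists_sub_eq_smul_of_mem_segment hx
      exact ⟨θ, hθ, .inr h⟩
  have hAC : ⟪v i - b, v (i + 1 + 1) - b⟫ < 0 := by simpa using hA (i + 1)
  have := inner_sub_ne_zero_of_mem_twoRays hAC (hrays y hy) (hrays z hz) (hrays u hu)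
    (sub_left_injective.ne hzy) (sub_left_injective.ne huy)
  rwa [sub_sub_sub_cancel_right, sub_sub_sub_cancel_right] at this

namespace IsSimplePolygon

variable {n : ℕ} {v : ZMod n → Pt} (hP : IsSimplePolygon v)
include hP

lemma neZero : NeZero n := ⟨by have := hP.1; omega⟩

lemma eq_of_mem_polygonEdge_of_mem_polygonEdge_add_one {i : ZMod n} {x : Pt}
    (h₁ : x ∈ polygonEdge v i) (h₂ : x ∈ polygonEdge v (i + 1)) : x = v (i + 1) := by
  have hx : x ∈ segment ℝ (v i) (v (i + 1)) ∩ segment ℝ (v (i + 1)) (v (i + 2)) :=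
    ⟨h₁, by rwa [polygonEdge, add_assoc, one_add_one_eq_two] at h₂⟩
  rwa [hP.2.2.1 i] at hx

lemma eq_or_adjacent_of_mem_polygonEdge {i k : ZMod n} {x : Pt} (hi : x ∈ polygonEdge v i)
    (hk : x ∈ polygonEdge v k) : k = i ∨ k = i + 1 ∨ i = k + 1 := by
  by_contra! h
  have hx : x ∈ segment ℝ (v k) (v (k + 1)) ∩ segment ℝ (v i) (v (i + 1)) := ⟨hk, hi⟩
  rwa [hP.2.2.2 k i h.1 h.2.1 h.2.2] at hx

lemma exists_forall_mem_polygonEdge {x : Pt} (hx : x ∈ polygonSet v) :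
    ∃ i, ∀ k, x ∈ polygonEdge v k → k = i ∨ k = i + 1 := by
  obtain ⟨j, hj⟩ := mem_iUnion.mp hx
  by_cases hprev : x ∈ polygonEdge v (j - 1)
  · refine ⟨j - 1, fun k hk => ?_⟩
    rcases hP.eq_or_adjacent_of_mem_polygonEdge hj hk with h | h | h
    · exact .inr (by rw [h]; ring)
    · have h₁ : x = v j := by
        simpa using hP.eq_of_mem_polygonEdge_of_mem_polygonEdge_add_one hprev
          (by rwa [sub_add_cancel])
      have h₂ : x = v (j + 1) := hP.eq_of_mem_polygonEdge_of_mem_polygonEdge_add_one hj (h ▸ hk)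
      exact absurd (h₁.symm.trans h₂) (hP.2.1 j)
    · exact .inl (by rw [h]; ring)
  · refine ⟨j, fun k hk => ?_⟩
    rcases hP.eq_or_adjacent_of_mem_polygonEdge hj hk with h | h | h
    · exact .inl h
    · exact .inr h
    · exact absurd (by rwa [h, add_sub_cancel_right]) hprev

theorem exists_pos_ball_subset_polygonEdge_union : ∃ δ > 0, ∀ y ∈ polygonSet v, ∃ i,
    polygonSet v ∩ ball y δ ⊆ polygonEdge v i ∪ polygonEdge v (i + 1) := by
  have := hP.neZero
  let U : ZMod n → Set Pt := fun i => (⋃ k ∈ {k | k ≠ i ∧ k ≠ i + 1}, polygonEdge v k)ᶜ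
  have hU_open : ∀ i, IsOpen (U i) := fun i =>
    ((toFinite _).isClosed_biUnion fun k _ => (isCompact_polygonEdge v k).isClosed).isOpen_compl
  have hU_cover : polygonSet v ⊆ ⋃ i, U i := fun x hx => by
    obtain ⟨i, hi⟩ := hP.exists_forall_mem_polygonEdge hx
    simp only [U, mem_iUnion, mem_compl_iff, not_exists]
    exact ⟨i, fun k hk hxk => (hi k hxk).elim hk.1 hk.2⟩
  obtain ⟨δ, hδ, hball⟩ :=
    lebesgue_number_lemma_of_metric (isCompact_polygonSet v) hU_open hU_cover
  refine ⟨δ, hδ, fun y hy => ?_⟩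
  obtain ⟨i, hi⟩ := hball y hy
  refine ⟨i, fun x ⟨hxP, hxy⟩ => ?_⟩
  obtain ⟨k, hk⟩ := mem_iUnion.mp hxP
  by_contra hx
  refine hi hxy (mem_biUnion (x := k) ⟨?_, ?_⟩ hk) <;> rintro rfl
  exacts [hx (.inl hk), hx (.inr hk)]

theorem exists_pos_mem_lowerBounds_legLengths (hA : ObtuseAngles v) :
    ∃ δ > 0, δ ∈ lowerBounds (legLengths v) := by
  obtain ⟨δ, hδ, hloc⟩ := hP.exists_pos_ball_subset_polygonEdge_union
  refine ⟨δ, hδ, ?_⟩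
  rintro _ ⟨y, z, u, hy, hz, hu, hyz, hyu, -, hlen, hperp, rfl⟩
  by_contra! hlt
  obtain ⟨i, hi⟩ := hloc y hy
  have near : ∀ x ∈ polygonSet v, ‖x - y‖ < δ → x ∈ polygonEdge v i ∪ polygonEdge v (i + 1) :=
    fun x hx hxy => hi ⟨hx, by rwa [mem_ball, dist_eq_norm]⟩
  exact hA.inner_sub_ne_zero (near y hy (by simpa using hδ)) (near z hz hlt)
    (near u hu (hlen ▸ hlt)) hyz.symm hyu.symm hperp

end IsSimplePolygon

theorem isCompact_legLengths_of_pos_lowerBound {n : ℕ} [NeZero n] {v : ZMod n → Pt} {δ : ℝ}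
    (hδ : 0 < δ) (hlow : δ ∈ lowerBounds (legLengths v)) : IsCompact (legLengths v) := by
  let K := polygonSet v
  let T : Set (Pt × Pt × Pt) := (K ×ˢ K ×ˢ K) ∩ {w | ‖w.2.1 - w.1‖ = ‖w.2.2 - w.1‖ ∧
      ⟪w.2.1 - w.1, w.2.2 - w.1⟫ = 0 ∧ δ ≤ ‖w.2.1 - w.1‖}
  have h₁ : Continuous fun w : Pt × Pt × Pt => w.2.1 - w.1 := by fun_prop
  have h₂ : Continuous fun w : Pt × Pt × Pt => w.2.2 - w.1 := by fun_prop
  have hK := isCompact_polygonSet v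
  have hT : IsCompact T := (hK.prod (hK.prod hK)).inter_right <|
    (isClosed_eq h₁.norm h₂.norm).inter <|
      (isClosed_eq (h₁.inner h₂) continuous_const).inter (isClosed_le continuous_const h₁.norm)
  suffices legLengths v = (fun w : Pt × Pt × Pt => ‖w.2.1 - w.1‖) '' T from
    this ▸ hT.image h₁.norm
  ext l
  constructor
  · intro hl
    obtain ⟨y, z, u, hy, hz, hu, -, -, -, hlen, hperp, rfl⟩ := id hl
    exact ⟨(y, z, u), ⟨⟨hy, hz, hu⟩, hlen, hperp, hlow hl⟩, rfl⟩
  · rintro ⟨⟨y, z, u⟩, ⟨⟨hy, hz, hu⟩, hlen, hperp, hδl⟩, rfl⟩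
    have hzy : 0 < ‖z - y‖ := hδ.trans_le hδl
    refine ⟨y, z, u, hy, hz, hu, ?_, ?_, ?_, hlen, hperp, rfl⟩ <;> rintro rfl
    · simp at hzy
    · simp [hlen] at hzy
    · rw [real_inner_self_eq_norm_sq] at hperp
      exact hzy.ne' (pow_eq_zero_iff two_ne_zero |>.mp hperp)

/-- For a simple polygon with all interior angles strictly between `π/2` and `3π/2`
that has at least one inscribed right isosceles triangle, the infimum of the leg
lengths of inscribed right isosceles triangles is positive and attained. -/
theorem minimal_inscribed_right_isosceles {n : ℕ} (v : ZMod n → Pt)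
    (hP : IsSimplePolygon v) (hA : ObtuseAngles v)
    (hex : (legLengths v).Nonempty) :
    0 < sInf (legLengths v) ∧ sInf (legLengths v) ∈ legLengths v := by
  have := hP.neZero
  obtain ⟨δ, hδ, hlow⟩ := hP.exists_pos_mem_lowerBounds_legLengths hA
  have hmin := (isCompact_legLengths_of_pos_lowerBound hδ hlow).sInf_mem hex
  exact ⟨hδ.trans_le (hlow hmin), hmin⟩

end
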